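/- Let (Ω, 𝓕, ℙ) be a probability space, X : Ω → 𝓧 a measurable map into a measurable space, W : Ω → ℝ a random variable taking values in {0,1}, and Y₀ : Ω → ℝ an integrable random variable. Let e(X) be a version of the conditional expectation E[W | σ(X)] and suppose there exists ε > 0 with ε ≤ e(X) ≤ 1 − ε almost surely. Assume Y₀ is conditionally independent of W given σ(X). Then, almost surely, E[Y₀·(1 − W) / (1 − e(X)) | σ(X)] = E[Y₀ | σ(X)]. -/

import Mathlib

/-!
Conditional independence factors the conditional expectation of the product:
`E[Y₀ (1 - W) | σ(X)] = E[Y₀ | σ(X)] (1 - e(X))`. This is seen fibrewise: under almost every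
measure of the conditional expectation kernel given `σ(X)`, `Y₀` and `W` are independent, so the
integral of their product is the product of the integrals. The factor `1 - e(X)` is
`σ(X)`-measurable and at least `ε`, so dividing by it commutes with the conditional expectation
and it cancels.
-/

open MeasureTheory ProbabilityTheory

namespace ProbabilityTheory

variable {Ω : Type*} {m' mΩ : MeasurableSpace Ω} [StandardBorelSpace Ω] {hm' : m' ≤ mΩ}
  {μ : Measure Ω} [IsFiniteMeasure μ]

theorem ae_ae_condExpKernel_of_ae {p : Ω → Prop} (hp : ∀ᵐ ω ∂μ, p ω) :
    ∀ᵐ ω ∂μ.trim hm', ∀ᵐ ω' ∂condExpKernel μ m' ω, p ω' := by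
  rw [← condExpKernel_comp_trim (μ := μ) hm'] at hp
  exact Measure.ae_ae_of_ae_comp hp

theorem CondIndepFun.congr {β β' : Type*} {mβ : MeasurableSpace β} {mβ' : MeasurableSpace β'}
    {f f' : Ω → β} {g g' : Ω → β'} (hfg : CondIndepFun m' hm' f g μ)
    (hf : f =ᵐ[μ] f') (hg : g =ᵐ[μ] g') :
    CondIndepFun m' hm' f' g' μ :=
  Kernel.IndepFun.congr' hfg (ae_ae_condExpKernel_of_ae hf) (ae_ae_condExpKernel_of_ae hg)

theorem CondIndepFun.ae_indepFun_condExpKernel {f g : Ω → ℝ}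
    (hfg : CondIndepFun m' hm' f g μ) (hf : Measurable f) (hg : Measurable g) :
    ∀ᵐ ω ∂μ, f ⟂ᵢ[condExpKernel μ m' ω] g := by
  refine ae_of_ae_trim hm' ?_
  filter_upwards [(condIndepFun_iff_map_prod_eq_prod_map_map hf hg).mp hfg] with ω hω
  rw [indepFun_iff_map_prod_eq_prod_map_map hf.aemeasurable hg.aemeasurable,
    ← Kernel.map_apply _ (hf.prodMk hg), hω, Kernel.prod_apply, Kernel.map_apply _ hf,
    Kernel.map_apply _ hg]

theorem CondIndepFun.condExp_mul_of_measurable {f g : Ω → ℝ}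
    (hfg : CondIndepFun m' hm' f g μ) (hf : Measurable f) (hg : Measurable g)
    (hf_int : Integrable f μ) (hg_int : Integrable g μ) (hfg_int : Integrable (f * g) μ) :
    μ[f * g | m'] =ᵐ[μ] μ[f | m'] * μ[g | m'] := by
  filter_upwards [hfg.ae_indepFun_condExpKernel hf hg,
    condExp_ae_eq_integral_condExpKernel hm' hfg_int,
    condExp_ae_eq_integral_condExpKernel hm' hf_int,
    condExp_ae_eq_integral_condExpKernel hm' hg_int] with ω hindep hfg_eq hf_eq hg_eq
  rw [hfg_eq, Pi.mul_apply, hf_eq, hg_eq]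
  exact hindep.integral_mul_eq_mul_integral hf.aestronglyMeasurable hg.aestronglyMeasurable

theorem CondIndepFun.condExp_mul {f g : Ω → ℝ} (hfg : CondIndepFun m' hm' f g μ)
    (hf_int : Integrable f μ) (hg_int : Integrable g μ) (hfg_int : Integrable (f * g) μ) :
    μ[f * g | m'] =ᵐ[μ] μ[f | m'] * μ[g | m'] := by
  obtain ⟨f', hf'_meas, hff'⟩ := hf_int.aestronglyMeasurable
  obtain ⟨g', hg'_meas, hgg'⟩ := hg_int.aestronglyMeasurable
  have hfg' : f * g =ᵐ[μ] f' * g' := hff'.mul hgg'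
  have h_version := (hfg.congr hff' hgg').condExp_mul_of_measurable hf'_meas.measurable
    hg'_meas.measurable (hf_int.congr hff') (hg_int.congr hgg') (hfg_int.congr hfg')
  filter_upwards [h_version, condExp_congr_ae (m := m') hff', condExp_congr_ae (m := m') hgg',
    condExp_congr_ae (m := m') hfg'] with ω h h1 h2 h3
  simp only [Pi.mul_apply] at h ⊢
  rw [h3, h, h1, h2]

end ProbabilityTheory

namespace MeasureTheory

theorem condExp_div_of_aestronglyMeasurable {Ω : Type*} {m mΩ : MeasurableSpace Ω}
    {μ : Measure Ω} (hm : m ≤ mΩ) {f h : Ω → ℝ} {ε : ℝ} (hε : 0 < ε)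
    (hh : AEStronglyMeasurable[m] h μ) (hh_bound : ∀ᵐ ω ∂μ, ε ≤ |h ω|) (hf : Integrable f μ) :
    μ[fun ω => f ω / h ω | m] =ᵐ[μ] fun ω => μ[f | m] ω / h ω := by
  have h_inv_bound : ∀ᵐ ω ∂μ, ‖(h ω)⁻¹‖ ≤ ε⁻¹ := by
    filter_upwards [hh_bound] with ω hω
    rw [norm_inv, Real.norm_eq_abs]
    exact inv_anti₀ hε hω
  have h_int : Integrable (fun ω => (h ω)⁻¹ * f ω) μ :=
    hf.bdd_mul (hh.inv₀.mono hm) h_inv_bound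
  simp_rw [div_eq_inv_mul]
  exact condExp_mul_of_aestronglyMeasurable_left hh.inv₀ h_int hf

end MeasureTheory

/-- Inverse-propensity-weighting identity for the control potential outcome:
`E[Y₀·(1 − W) / (1 − e(X)) | σ(X)] = E[Y₀ | σ(X)]` a.s. -/
theorem ipw_control_condExp
    {Ω 𝓧 : Type*} [MeasureSpace Ω] [IsProbabilityMeasure (ℙ : Measure Ω)]
    [StandardBorelSpace Ω]
    [m𝓧 : MeasurableSpace 𝓧]
    (X : Ω → 𝓧) (hX : Measurable X)
    (W Y₀ : Ω → ℝ)
    (hW : Measurable W) (hWbin : ∀ ω, W ω = 0 ∨ W ω = 1)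
    (hY₀ : Integrable Y₀ ℙ)
    (e : Ω → ℝ) (he : e =ᵐ[ℙ] ℙ[W | m𝓧.comap X])
    (ε : ℝ) (hε : 0 < ε)
    (hbound : ∀ᵐ ω ∂ℙ, ε ≤ e ω ∧ e ω ≤ 1 - ε)
    (hindep : CondIndepFun (m𝓧.comap X) hX.comap_le Y₀ W ℙ) :
    ℙ[(fun ω => Y₀ ω * (1 - W ω) / (1 - e ω)) | m𝓧.comap X]
      =ᵐ[ℙ] ℙ[Y₀ | m𝓧.comap X] := by
  have hW_int : Integrable W ℙ := .of_bound hW.aestronglyMeasurable 1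
    (ae_of_all _ fun ω => by rcases hWbin ω with h | h <;> simp [h])
  have hV_bound : ∀ ω, ‖(1 - W) ω‖ ≤ 1 := fun ω => by rcases hWbin ω with h | h <;> simp [h]
  have hV_int : Integrable (1 - W) ℙ := (integrable_const 1).sub hW_int
  have hYV_int : Integrable (Y₀ * (1 - W)) ℙ :=
    hY₀.mul_bdd hV_int.aestronglyMeasurable (ae_of_all _ hV_bound)
  have h_prod : ℙ[Y₀ * (1 - W) | m𝓧.comap X] =ᵐ[ℙ] ℙ[Y₀ | m𝓧.comap X] * ℙ[1 - W | m𝓧.comap X] :=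
    (hindep.comp measurable_id (measurable_const.sub measurable_id)).condExp_mul hY₀ hV_int hYV_int
  have h_compl : ℙ[1 - W | m𝓧.comap X] =ᵐ[ℙ] fun ω => 1 - e ω := by
    filter_upwards [condExp_sub (integrable_const 1) hW_int (m𝓧.comap X), he] with ω h_sub h_e
    rw [condExp_const hX.comap_le] at h_sub
    rw [h_e]
    exact h_sub
  have he_meas : AEStronglyMeasurable[m𝓧.comap X] (fun ω => 1 - e ω) ℙ :=
    aestronglyMeasurable_const.sub (stronglyMeasurable_condExp.aestronglyMeasurable.congr he.symm)
  have h_gap : ∀ᵐ ω ∂ℙ, ε ≤ |1 - e ω| := by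
    filter_upwards [hbound] with ω hω
    exact (le_abs_self _).trans' (by linarith [hω.2])
  filter_upwards [condExp_div_of_aestronglyMeasurable hX.comap_le hε he_meas h_gap hYV_int,
    h_prod, h_compl, h_gap] with ω h_div h_prod h_compl hω
  change ℙ[fun ω => (Y₀ * (1 - W)) ω / (1 - e ω) | m𝓧.comap X] ω = _
  rw [h_div, h_prod, Pi.mul_apply, h_compl, mul_div_cancel_right₀ _ (abs_pos.mp (hε.trans_le hω))]
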